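/- arXiv:1602.02726 — 6 statements merged into one kernel-verified Lean document; each statement's English description precedes it below -/
import Mathlib

section
/- If ν ≥ 0, |b| ≥ ν, and sgn(a) ≠ sgn(b), then |S_ν(a) - S_ν(b)| ≤ |a - b| - ν. -/
noncomputable def sgn (c : ℝ) : ℝ := if 0 ≤ c then 1 else -1

noncomputable def softThresh (ν v : ℝ) : ℝ := max (|v| - ν) 0 * sgn v

theorem softThresh_contract_sign (ν a b : ℝ) (hν : 0 ≤ ν) (hb : ν ≤ |b|)
    (hsgn : sgn a ≠ sgn b) :
    |softThresh ν a - softThresh ν b| ≤ |a - b| - ν := by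
  rcases le_or_gt 0 a with ha | ha <;> rcases le_or_gt 0 b with hb' | hb'
  · exact absurd (by simp [sgn, ha, hb']) hsgn
  · have hb2 : ν ≤ -b := by rwa [abs_of_neg hb'] at hb
    have hab : |a - b| = a - b := abs_of_nonneg (by linarith)
    have hSb : softThresh ν b = b + ν := by
      unfold softThresh sgn
      rw [if_neg (not_le.mpr hb'), abs_of_neg hb', max_eq_left (by linarith)]; ring
    rcases le_or_gt a ν with h | h
    · have hSa : softThresh ν a = 0 := by
        unfold softThresh sgn
        rw [abs_of_nonneg ha, max_eq_right (by linarith)]; ring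
      rw [hSa, hSb, hab, zero_sub, abs_of_nonneg (by linarith)]; linarith
    · have hSa : softThresh ν a = a - ν := by
        unfold softThresh sgn
        rw [if_pos ha, abs_of_nonneg ha, max_eq_left (by linarith)]; ring
      rw [hSa, hSb, hab, abs_of_nonneg (by linarith)]; linarith
  · have hb2 : ν ≤ b := by rwa [abs_of_nonneg hb'] at hb
    have hab : |a - b| = b - a := by rw [abs_sub_comm]; exact abs_of_nonneg (by linarith)
    have hSb : softThresh ν b = b - ν := by
      unfold softThresh sgn
      rw [if_pos hb', abs_of_nonneg hb', max_eq_left (by linarith)]; ring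
    rcases le_or_gt (-a) ν with h | h
    · have hSa : softThresh ν a = 0 := by
        unfold softThresh sgn
        rw [abs_of_neg ha, max_eq_right (by linarith)]; ring
      rw [hSa, hSb, hab, zero_sub, abs_of_nonpos (by linarith)]; linarith
    · have hSa : softThresh ν a = a + ν := by
        unfold softThresh sgn
        rw [if_neg (not_le.mpr ha), abs_of_neg ha, max_eq_left (by linarith)]; ring
      rw [hSa, hSb, hab, abs_of_nonpos (by linarith)]; linarith
  · exact absurd (by simp [sgn, not_le.mpr ha, not_le.mpr hb']) hsgn
end

section
/- If ν ≥ 0 and S_ν(a) ≠ 0 = S_ν(b), then |S_ν(a) - S_ν(b)| ≤ |a - b| - (ν - |b|). -/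
theorem softThresh_contract_zero (ν a b : ℝ) (hν : 0 ≤ ν)
    (ha : softThresh ν a ≠ 0) (hb : softThresh ν b = 0) :
    |softThresh ν a - softThresh ν b| ≤ |a - b| - (ν - |b|) := by
  have hsb : sgn b ≠ 0 := by unfold sgn; split <;> norm_num
  have hmb : max (|b| - ν) 0 = 0 := by
    rcases mul_eq_zero.mp hb with h | h
    · exact h
    · exact absurd h hsb
  have hbν : |b| - ν ≤ 0 := hmb ▸ le_max_left _ _
  have hma : max (|a| - ν) 0 ≠ 0 := fun h => ha (by simp [softThresh, h])
  have hapos : 0 < |a| - ν := by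
    rcases lt_or_ge 0 (|a| - ν) with h | h
    · exact h
    · exact absurd (max_eq_right h) hma
  have hmax : max (|a| - ν) 0 = |a| - ν := max_eq_left hapos.le
  have hsa : |sgn a| = 1 := by unfold sgn; split <;> norm_num
  have : |softThresh ν a - softThresh ν b| = |a| - ν := by
    rw [hb, sub_zero, softThresh, abs_mul, hsa, mul_one, hmax,
      abs_of_pos hapos]
  rw [this]
  have htri : |a| - |b| ≤ |a - b| := abs_sub_abs_le_abs_sub a b
  linarith
end

section
/- Let {φ_k}, {δ_k}, {σ_k} be sequences of nonnegative reals satisfying φ_{k+1} - φ_k ≤ σ_k(φ_k - φ_{k-1}) + δ_k for all k ≥ 1, where σ_k ≤ σ̄ < 1 for all k and ∑_k δ_k < ∞. Then lim_{k→∞} φ_k exists. -/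
theorem limit_exists_of_inertial_recursion
    (φ δ σ : ℕ → ℝ) (σbar : ℝ)
    (hφ : ∀ k, 0 ≤ φ k) (hδ : ∀ k, 0 ≤ δ k) (hσ : ∀ k, 0 ≤ σ k)
    (hσbar : ∀ k, σ k ≤ σbar) (hσbar1 : σbar < 1)
    (hδsum : Summable δ)
    (hrec : ∀ k ≥ 1, φ (k + 1) - φ k ≤ σ k * (φ k - φ (k - 1)) + δ k) :
    ∃ l : ℝ, Filter.Tendsto φ Filter.atTop (nhds l) := by
  set θ : ℕ → ℝ := fun k => max (φ (k + 1) - φ k) 0 with hθdef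
  have hθ0 : ∀ k, 0 ≤ θ k := fun k => le_max_right _ _
  have hσbar0 : 0 ≤ σbar := le_trans (hσ 0) (hσbar 0)
  have hstep : ∀ n, θ (n + 1) ≤ σbar * θ n + δ (n + 1) := by
    intro n
    have h := hrec (n + 1) (by omega)
    simp only [Nat.add_sub_cancel] at h
    have h1 : σ (n + 1) * (φ (n + 1) - φ n) ≤ σbar * θ n := by
      calc σ (n + 1) * (φ (n + 1) - φ n) ≤ σ (n + 1) * θ n :=
            mul_le_mul_of_nonneg_left (le_max_left _ _) (hσ _)
        _ ≤ σbar * θ n := mul_le_mul_of_nonneg_right (hσbar _) (hθ0 n)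
    have h2 : φ (n + 1 + 1) - φ (n + 1) ≤ σbar * θ n + δ (n + 1) :=
      le_trans h (by linarith)
    have h3 : (0 : ℝ) ≤ σbar * θ n + δ (n + 1) :=
      add_nonneg (mul_nonneg hσbar0 (hθ0 n)) (hδ _)
    exact max_le h2 h3
  -- partial sums of θ are bounded
  have hδle : ∀ n, ∑ i ∈ Finset.range n, δ (i + 1) ≤ ∑' i, δ i := by
    intro n
    calc ∑ i ∈ Finset.range n, δ (i + 1)
        ≤ ∑ i ∈ Finset.range (n + 1), δ i := by
          rw [Finset.sum_range_succ']
          simp [hδ 0]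
      _ ≤ ∑' i, δ i := Summable.sum_le_tsum _ (fun i _ => hδ i) hδsum
  have hbound : ∀ n, ∑ i ∈ Finset.range n, θ i ≤ (θ 0 + ∑' i, δ i) / (1 - σbar) := by
    intro n
    have hSn : ∀ m, ∑ i ∈ Finset.range m, θ i ≤ θ 0 + σbar * (∑ i ∈ Finset.range m, θ i) + ∑' i, δ i := by
      intro m
      cases m with
      | zero => simp; linarith [hθ0 0, (tsum_nonneg hδ : (0:ℝ) ≤ ∑' i, δ i), mul_nonneg hσbar0 (hθ0 0)]
      | succ m =>
        have key : ∑ i ∈ Finset.range (m + 1), θ i = θ 0 + ∑ i ∈ Finset.range m, θ (i + 1) := by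
          rw [Finset.sum_range_succ']; ring
        have hle : ∑ i ∈ Finset.range m, θ (i + 1)
            ≤ ∑ i ∈ Finset.range m, (σbar * θ i + δ (i + 1)) :=
          Finset.sum_le_sum (fun i _ => hstep i)
        rw [Finset.sum_add_distrib, ← Finset.mul_sum] at hle
        have h1 : σbar * ∑ i ∈ Finset.range m, θ i ≤ σbar * ∑ i ∈ Finset.range (m + 1), θ i := by
          apply mul_le_mul_of_nonneg_left _ hσbar0
          rw [Finset.sum_range_succ]
          linarith [hθ0 m]
        have h2 := hδle m
        linarith
    have h := hSn n
    have h1 : (1 - σbar) * (∑ i ∈ Finset.range n, θ i) ≤ θ 0 + ∑' i, δ i := by ring_nf; linarith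
    rw [le_div_iff₀ (by linarith : (0:ℝ) < 1 - σbar)]
    nlinarith [h1]
  have hθsum : Summable θ := summable_of_sum_range_le hθ0 hbound
  -- ψ k = φ k - partial sums of θ is antitone and bounded below
  set ψ : ℕ → ℝ := fun k => φ k - ∑ i ∈ Finset.range k, θ i with hψdef
  have hanti : Antitone ψ := by
    apply antitone_nat_of_succ_le
    intro n
    simp only [hψdef, Finset.sum_range_succ]
    have : φ (n + 1) - φ n ≤ θ n := le_max_left _ _
    linarith
  have hbdd : ∀ n, -(∑' i, θ i) ≤ ψ n := by
    intro n
    have h1 : ∑ i ∈ Finset.range n, θ i ≤ ∑' i, θ i := Summable.sum_le_tsum _ (fun i _ => hθ0 i) hθsum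
    have := hφ n
    simp only [hψdef]
    linarith
  have hψconv : ∃ l, Filter.Tendsto ψ Filter.atTop (nhds l) :=
    ⟨_, tendsto_atTop_ciInf hanti ⟨_, fun x ⟨n, hn⟩ => hn ▸ hbdd n⟩⟩
  obtain ⟨l, hl⟩ := hψconv
  refine ⟨l + ∑' i, θ i, ?_⟩
  have hsum : Filter.Tendsto (fun n => ∑ i ∈ Finset.range n, θ i) Filter.atTop (nhds (∑' i, θ i)) :=
    hθsum.hasSum.tendsto_sum_nat
  have : φ = fun n => ψ n + ∑ i ∈ Finset.range n, θ i := by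
    funext n; simp [hψdef]
  rw [this]
  exact hl.add hsum
end

section
/- Let f : H → ℝ be convex and Fréchet differentiable with L-Lipschitz gradient (L > 0). Then for all u, v ∈ H: ⟨∇f(u) - ∇f(v), u - v⟩ ≥ (1/L)‖∇f(u) - ∇f(v)‖² (Baillon–Haddad). -/
open Set

lemma line_deriv {H : Type*} [NormedAddCommGroup H] [InnerProductSpace ℝ H] [CompleteSpace H]
    (f : H → ℝ) (g : H → H) (hdiff : ∀ x, HasGradientAt f (g x) x)
    (u d : H) (t : ℝ) :
    HasDerivAt (fun s : ℝ => f (u + s • d)) (inner ℝ (g (u + t • d)) d : ℝ) t := by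
  have hc : HasDerivAt (fun s : ℝ => u + s • d) d t := by
    simpa using ((hasDerivAt_id t).smul_const d).const_add u
  have hF : HasFDerivAt f (InnerProductSpace.toDual ℝ H (g (u + t • d))) (u + t • d) :=
    (hasGradientAt_iff_hasFDerivAt).mp (hdiff _)
  simpa [InnerProductSpace.toDual_apply_apply, Function.comp_def] using hF.comp_hasDerivAt t hc

-- first-order condition for convex functions
lemma first_order {H : Type*} [NormedAddCommGroup H] [InnerProductSpace ℝ H] [CompleteSpace H]
    (f : H → ℝ) (g : H → H) (hf : ConvexOn ℝ Set.univ f)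
    (hdiff : ∀ x, HasGradientAt f (g x) x) (u v : H) :
    f u + inner ℝ (g u) (v - u) ≤ f v := by
  set ψ : ℝ → ℝ := fun s => f (u + s • (v - u)) with hψ
  have hconv : ConvexOn ℝ Set.univ ψ := by
    have := hf.comp_affineMap
      (AffineMap.lineMap u v : ℝ →ᵃ[ℝ] H)
    have he : ψ = f ∘ (AffineMap.lineMap u v : ℝ →ᵃ[ℝ] H) := by
      funext s; simp [ψ, AffineMap.lineMap_apply]
      congr 1
      module
    rw [he]
    simpa using this
  have hd : HasDerivAt ψ (inner ℝ (g u) (v - u) : ℝ) 0 := by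
    simpa using line_deriv f g hdiff u (v - u) 0
  have := hconv.le_slope_of_hasDerivWithinAt (mem_univ (0:ℝ)) (mem_univ (1:ℝ))
    one_pos hd.hasDerivWithinAt
  simp [slope_def_field, ψ] at this
  linarith

-- descent lemma
lemma descent {H : Type*} [NormedAddCommGroup H] [InnerProductSpace ℝ H] [CompleteSpace H]
    (f : H → ℝ) (g : H → H) (L : ℝ)
    (hdiff : ∀ x, HasGradientAt f (g x) x)
    (hlip : ∀ u v : H, ‖g u - g v‖ ≤ L * ‖u - v‖) (u v : H) :
    f v ≤ f u + inner ℝ (g u) (v - u) + L / 2 * ‖v - u‖ ^ 2 := by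
  set d := v - u with hd
  set χ : ℝ → ℝ := fun t => f (u + t • d) - t * inner ℝ (g u) d - L * t ^ 2 * ‖d‖ ^ 2 / 2 with hχ
  have hderiv : ∀ t : ℝ, HasDerivAt χ
      ((inner ℝ (g (u + t • d)) d : ℝ) - inner ℝ (g u) d - L * t * ‖d‖ ^ 2) t := by
    intro t
    have h1 := line_deriv f g hdiff u d t
    have h2 : HasDerivAt (fun t : ℝ => t * (inner ℝ (g u) d : ℝ)) (inner ℝ (g u) d : ℝ) t := by
      simpa using (hasDerivAt_id t).mul_const (inner ℝ (g u) d : ℝ)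
    have h3 : HasDerivAt (fun t : ℝ => L * t ^ 2 * ‖d‖ ^ 2 / 2) (L * t * ‖d‖ ^ 2) t := by
      have : HasDerivAt (fun t : ℝ => t ^ 2) (2 * t) t := by
        simpa using hasDerivAt_pow 2 t
      have := ((this.const_mul L).mul_const (‖d‖ ^ 2)).div_const 2
      exact this.congr_deriv (by ring)
    exact (h1.sub h2).sub h3
  have hmono : AntitoneOn χ (Icc (0:ℝ) 1) := by
    apply antitoneOn_of_deriv_nonpos (convex_Icc 0 1)
    · exact Continuous.continuousOn (by
        have : ∀ t, HasDerivAt χ _ t := hderiv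
        exact (fun t => (hderiv t).differentiableAt) |> Differentiable.continuous)
    · intro t ht
      exact (hderiv t).differentiableAt.differentiableWithinAt
    · intro t ht
      rw [interior_Icc] at ht
      rw [(hderiv t).deriv]
      have hb : (inner ℝ (g (u + t • d)) d : ℝ) - inner ℝ (g u) d ≤ L * t * ‖d‖ ^ 2 := by
        have h1 : (inner ℝ (g (u + t • d)) d : ℝ) - inner ℝ (g u) d
            = inner ℝ (g (u + t • d) - g u) d := by rw [inner_sub_left]
        rw [h1]
        calc (inner ℝ (g (u + t • d) - g u) d : ℝ) ≤ ‖g (u + t • d) - g u‖ * ‖d‖ :=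
              real_inner_le_norm _ _
          _ ≤ (L * ‖(u + t • d) - u‖) * ‖d‖ := by
              gcongr; exact hlip _ _
          _ = L * (t * ‖d‖) * ‖d‖ := by
              congr 2; simp [norm_smul, abs_of_pos ht.1]
          _ = L * t * ‖d‖ ^ 2 := by ring
      linarith
  have h01 := hmono (left_mem_Icc.mpr one_pos.le) (right_mem_Icc.mpr one_pos.le) one_pos.le
  simp [χ] at h01
  have : f (u + d) ≤ f u + inner ℝ (g u) d + L * ‖d‖ ^ 2 / 2 := by linarith
  simpa [hd, add_sub_cancel] using this |>.trans_eq (by ring)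

lemma key {H : Type*} [NormedAddCommGroup H] [InnerProductSpace ℝ H] [CompleteSpace H]
    (f : H → ℝ) (g : H → H) (L : ℝ) (hL : 0 < L) (hf : ConvexOn ℝ Set.univ f)
    (hdiff : ∀ x, HasGradientAt f (g x) x)
    (hlip : ∀ u v : H, ‖g u - g v‖ ≤ L * ‖u - v‖) (u v : H) :
    f u + inner ℝ (g u) (v - u) + 1 / (2 * L) * ‖g v - g u‖ ^ 2 ≤ f v := by
  set w := v - L⁻¹ • (g v - g u) with hw
  have h1 := first_order f g hf hdiff u w
  have h2 := descent f g L hdiff hlip v w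
  have e1 : (inner ℝ (g u) (w - u) : ℝ) = inner ℝ (g u) (v - u) + inner ℝ (g u) (w - v) := by
    rw [← inner_add_right]; congr 1; abel
  have e2 : w - v = -(L⁻¹ • (g v - g u)) := by rw [hw]; abel
  have e3 : (inner ℝ (g v) (w - v) : ℝ) = - (L⁻¹ * inner ℝ (g v) (g v - g u)) := by
    rw [e2, inner_neg_right, real_inner_smul_right]
  have e4 : (inner ℝ (g u) (w - v) : ℝ) = - (L⁻¹ * inner ℝ (g u) (g v - g u)) := by
    rw [e2, inner_neg_right, real_inner_smul_right]
  have e5 : ‖w - v‖ ^ 2 = L⁻¹ ^ 2 * ‖g v - g u‖ ^ 2 := by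
    rw [e2, norm_neg, norm_smul]
    simp [abs_of_pos hL]
    ring
  have e6 : (inner ℝ (g v) (g v - g u) : ℝ) - inner ℝ (g u) (g v - g u) = ‖g v - g u‖ ^ 2 := by
    rw [← inner_sub_left, real_inner_self_eq_norm_sq]
  rw [e1, e4] at h1
  rw [e3, e5] at h2
  have key2 : L⁻¹ * (inner ℝ (g v) (g v - g u) : ℝ) - L⁻¹ * inner ℝ (g u) (g v - g u)
      = L⁻¹ * ‖g v - g u‖ ^ 2 := by rw [← mul_sub, e6]
  have hs : L / 2 * L⁻¹ ^ 2 = 1 / (2 * L) := by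
    field_simp
  have hc : L / 2 * (L⁻¹ ^ 2 * ‖g v - g u‖ ^ 2) = 1 / (2 * L) * ‖g v - g u‖ ^ 2 := by
    rw [← mul_assoc, hs]
  have hs2 : L⁻¹ = 2 * (1 / (2 * L)) := by
    field_simp
  have hN : L⁻¹ * ‖g v - g u‖ ^ 2 = 2 * (1 / (2 * L) * ‖g v - g u‖ ^ 2) := by
    rw [← mul_assoc, hs2]
  linarith

theorem baillon_haddad
    {H : Type*} [NormedAddCommGroup H] [InnerProductSpace ℝ H] [CompleteSpace H]
    (f : H → ℝ) (L : ℝ) (hL : 0 < L)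
    (hf : ConvexOn ℝ Set.univ f)
    (hdiff : ∀ x, HasGradientAt f (gradient f x) x)
    (hlip : ∀ u v : H, ‖gradient f u - gradient f v‖ ≤ L * ‖u - v‖) :
    ∀ u v : H,
      (1 / L) * ‖gradient f u - gradient f v‖^2 ≤
        inner ℝ (gradient f u - gradient f v) (u - v) := by
  intro u v
  set g := gradient f with hg
  have k1 := key f g L hL hf hdiff hlip u v
  have k2 := key f g L hL hf hdiff hlip v u
  have e1 : (inner ℝ (g u) (v - u) : ℝ) + inner ℝ (g v) (u - v)
      = - inner ℝ (g u - g v) (u - v) := by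
    rw [inner_sub_left]
    have : (inner ℝ (g u) (v - u) : ℝ) = - inner ℝ (g u) (u - v) := by
      rw [← inner_neg_right]; congr 1; abel
    rw [this]; ring
  have e2 : ‖g v - g u‖ = ‖g u - g v‖ := by rw [← norm_neg]; congr 1; abel
  rw [e2] at k1
  have hNN : (1 / L) * ‖g u - g v‖ ^ 2
      = 1 / (2 * L) * ‖g u - g v‖ ^ 2 + 1 / (2 * L) * ‖g u - g v‖ ^ 2 := by
    rw [← add_mul]; congr 1
    field_simp
    norm_num
  linarith
end

section
/- Suppose x, y, z ∈ ℝⁿ, ν ≥ 0, and let P ⊆ {1,…,n} be a set of indices such that for j ∈ P, |z_j| ≥ ν and sgn(y_j) ≠ sgn(z_j). Then ∑_{j=1}^n |S_ν(y_j) - S_ν(z_j)|² ≤ ‖y - z‖² - ν²·|P|. -/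
lemma softThresh_nonneg_eq (ν a : ℝ) (ha : 0 ≤ a) : softThresh ν a = max (a - ν) 0 := by
  simp [softThresh, sgn, ha, abs_of_nonneg ha]

lemma softThresh_neg_eq (ν a : ℝ) (ha : a < 0) : softThresh ν a = -(max (-a - ν) 0) := by
  simp [softThresh, sgn, not_le.2 ha, abs_of_neg ha]

lemma lip (ν a b : ℝ) (hν : 0 ≤ ν) : |softThresh ν a - softThresh ν b| ≤ |a - b| := by
  have h1 := le_abs_self (a - b)
  have h2 := neg_abs_le (a - b)
  rcases le_or_gt 0 a with ha | ha <;> rcases le_or_gt 0 b with hb | hb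
  · rw [softThresh_nonneg_eq ν a ha, softThresh_nonneg_eq ν b hb]
    rcases le_total (a - ν) 0 with h | h <;> rcases le_total (b - ν) 0 with h' | h' <;>
      simp [max_eq_right, max_eq_left, h, h', abs_le] <;> constructor <;> linarith
  · rw [softThresh_nonneg_eq ν a ha, softThresh_neg_eq ν b hb]
    rcases le_total (a - ν) 0 with h | h <;> rcases le_total (-b - ν) 0 with h' | h' <;>
      simp [max_eq_right, max_eq_left, h, h', abs_le] <;> constructor <;> linarith
  · rw [softThresh_neg_eq ν a ha, softThresh_nonneg_eq ν b hb]
    rcases le_total (-a - ν) 0 with h | h <;> rcases le_total (b - ν) 0 with h' | h' <;>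
      simp [max_eq_right, max_eq_left, h, h', abs_le] <;> constructor <;> linarith
  · rw [softThresh_neg_eq ν a ha, softThresh_neg_eq ν b hb]
    rcases le_total (-a - ν) 0 with h | h <;> rcases le_total (-b - ν) 0 with h' | h' <;>
      simp [max_eq_right, max_eq_left, h, h', abs_le] <;> constructor <;> linarith

lemma key_s15 (ν a b : ℝ) (hν : 0 ≤ ν) (hb : ν ≤ |b|) (hs : sgn a ≠ sgn b) :
    |softThresh ν a - softThresh ν b| ≤ |a - b| - ν ∧ ν ≤ |a - b| := by
  rcases le_or_gt 0 a with ha | ha <;> rcases le_or_gt 0 b with hb' | hb'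
  · exfalso; apply hs; simp [sgn, ha, hb']
  · -- a ≥ 0, b < 0, |b| = -b ≥ ν
    rw [abs_of_neg hb'] at hb
    rw [softThresh_nonneg_eq ν a ha, softThresh_neg_eq ν b hb']
    have hab : |a - b| = a - b := abs_of_nonneg (by linarith)
    rw [hab]
    rw [max_eq_left (by linarith : (0:ℝ) ≤ -b - ν)]
    constructor
    · rcases le_total (a - ν) 0 with h | h <;>
        simp [max_eq_right, max_eq_left, h, abs_le] <;> constructor <;> linarith
    · linarith
  · rw [abs_of_nonneg hb'] at hb
    rw [softThresh_neg_eq ν a ha, softThresh_nonneg_eq ν b hb']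
    have hab : |a - b| = -(a - b) := abs_of_neg (by linarith)
    rw [hab]
    rw [max_eq_left (by linarith : (0:ℝ) ≤ b - ν)]
    constructor
    · rcases le_total (-a - ν) 0 with h | h <;>
        simp [max_eq_right, max_eq_left, h, abs_le] <;> constructor <;> linarith
    · linarith
  · exfalso; apply hs; simp [sgn, not_le.2 ha, not_le.2 hb']

theorem softThresh_sum_contract {n : ℕ}
    (y z : EuclideanSpace ℝ (Fin n)) (ν : ℝ) (hν : 0 ≤ ν)
    (P : Finset (Fin n))
    (hP : ∀ j ∈ P, ν ≤ |z j| ∧ sgn (y j) ≠ sgn (z j)) :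
    ∑ j, |softThresh ν (y j) - softThresh ν (z j)|^2 ≤
      ‖y - z‖^2 - ν^2 * P.card := by
  have hnorm : ‖y - z‖^2 = ∑ j, (y j - z j)^2 := by
    rw [EuclideanSpace.norm_eq, Real.sq_sqrt (by positivity)]
    simp [sq_abs]
  have step : ∑ j, |softThresh ν (y j) - softThresh ν (z j)|^2 ≤
      ∑ j, ((y j - z j)^2 - if j ∈ P then ν^2 else 0) := by
    apply Finset.sum_le_sum
    intro j _
    by_cases hj : j ∈ P
    · obtain ⟨h1, h2⟩ := hP j hj
      obtain ⟨hk1, hk2⟩ := key_s15 ν (y j) (z j) hν h1 h2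
      simp only [hj, if_pos]
      have h3 : 0 ≤ |softThresh ν (y j) - softThresh ν (z j)| := abs_nonneg _
      nlinarith [sq_abs (y j - z j), mul_self_le_mul_self h3 hk1, mul_le_mul_of_nonneg_left hk2 hν]
    · simp only [hj, if_neg, not_false_iff, sub_zero]
      have := lip ν (y j) (z j) hν
      have h3 : 0 ≤ |softThresh ν (y j) - softThresh ν (z j)| := abs_nonneg _
      nlinarith [sq_abs (y j - z j), mul_self_le_mul_self h3 this]
  have hsum : ∑ j, (if j ∈ P then ν^2 else 0) = ν^2 * P.card := by
    rw [Finset.sum_ite_mem, Finset.univ_inter, Finset.sum_const, nsmul_eq_mul, mul_comm]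
  rw [Finset.sum_sub_distrib, hsum] at step
  linarith [hnorm ▸ step]
end

section
/- Let {N_k} be nonnegative reals, {α_k} satisfy 0 ≤ α_k ≤ ᾱ < 1, {δ_k} nonnegative with ∑ δ_k < ∞, and {θ_k} real with θ_{k+1} ≤ α_k θ_k + δ_k - (1/2)N_{k+1} for all k ≥ 1. If additionally φ_k ≥ 0 where θ_k = φ_k - φ_{k-1}, then ∑_k N_k < ∞. -/
theorem summable_of_inertial_inequality
    (φ N δ α : ℕ → ℝ) (αbar : ℝ)
    (hφ : ∀ k, 0 ≤ φ k) (hN : ∀ k, 0 ≤ N k) (hδ : ∀ k, 0 ≤ δ k)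
    (hα0 : ∀ k, 0 ≤ α k) (hαbar : ∀ k, α k ≤ αbar) (hαbar1 : αbar < 1)
    (hδsum : Summable δ)
    (hrec : ∀ k ≥ 1,
      (φ (k + 1) - φ k) ≤ α k * (φ k - φ (k - 1)) + δ k - (1/2) * N (k + 1)) :
    Summable N := by
  set t : ℕ → ℝ := fun k => max (φ k - φ (k - 1)) 0 with ht
  have ht0 : ∀ k, 0 ≤ t k := fun k => le_max_right _ _
  have hαb0 : 0 ≤ αbar := le_trans (hα0 0) (hαbar 0)
  have habt : ∀ k, α k * (φ k - φ (k - 1)) ≤ αbar * t k := by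
    intro k
    rcases le_or_gt 0 (φ k - φ (k - 1)) with h | h
    · have htk : t k = φ k - φ (k - 1) := max_eq_left h
      rw [htk]
      exact mul_le_mul (hαbar k) le_rfl h hαb0
    · exact (mul_nonpos_of_nonneg_of_nonpos (hα0 k) h.le).trans
        (mul_nonneg hαb0 (ht0 k))
  set D := ∑' k, δ k with hDdef
  have hD0 : 0 ≤ D := tsum_nonneg hδ
  have hDb : ∀ n : ℕ, ∑ k ∈ Finset.range n, δ k ≤ D := fun n =>
    Summable.sum_le_tsum _ (fun k _ => hδ k) hδsum
  have ht1 : ∀ k : ℕ, t (k + 1) = max (φ (k + 1) - φ k) 0 := by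
    intro k; simp [ht]
  have htrec : ∀ k : ℕ, t (k + 2) ≤ αbar * t (k + 1) + δ (k + 1) := by
    intro k
    have h1 := hrec (k + 1) (by omega)
    have h2 := habt (k + 1)
    simp only [Nat.add_sub_cancel] at h1 h2
    have hrhs : 0 ≤ αbar * t (k + 1) + δ (k + 1) :=
      add_nonneg (mul_nonneg hαb0 (ht0 _)) (hδ _)
    rw [ht1 (k + 1)]
    refine max_le ?_ hrhs
    have := hN (k + 2)
    linarith
  set S : ℕ → ℝ := fun n => ∑ k ∈ Finset.range n, t (k + 1) with hS
  have hSb : ∀ n, (1 - αbar) * S n ≤ t 1 + D := by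
    intro n
    induction n with
    | zero => simp [hS]; positivity
    | succ n ih =>
      have hstep : S (n + 1) ≤ αbar * S n + D + t 1 := by
        have h1 : S (n + 1) = (∑ k ∈ Finset.range n, t (k + 2)) + t 1 := by
          simp [hS, Finset.sum_range_succ']
        have h2 : ∑ k ∈ Finset.range n, t (k + 2) ≤
            ∑ k ∈ Finset.range n, (αbar * t (k + 1) + δ (k + 1)) :=
          Finset.sum_le_sum (fun k _ => htrec k)
        have h3 : ∑ k ∈ Finset.range n, (αbar * t (k + 1) + δ (k + 1)) =
            αbar * S n + ∑ k ∈ Finset.range n, δ (k + 1) := by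
          rw [Finset.sum_add_distrib, ← Finset.mul_sum]
        have h4 : ∑ k ∈ Finset.range n, δ (k + 1) ≤ D := by
          have h5 : ∑ k ∈ Finset.range (n + 1), δ k =
              (∑ k ∈ Finset.range n, δ (k + 1)) + δ 0 :=
            Finset.sum_range_succ' _ _
          have := hDb (n + 1)
          have := hδ 0
          linarith
        linarith
      have h6 : (1 - αbar) * S (n + 1) ≤ (1 - αbar) * (αbar * S n + D + t 1) :=
        mul_le_mul_of_nonneg_left hstep (by linarith)
      have h7 : (1 - αbar) * (αbar * S n + D + t 1)
          = αbar * ((1 - αbar) * S n) + (1 - αbar) * (D + t 1) := by ring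
      have h8 : αbar * ((1 - αbar) * S n) ≤ αbar * (t 1 + D) :=
        mul_le_mul_of_nonneg_left ih hαb0
      nlinarith
  set C : ℝ := (t 1 + D) / (1 - αbar) with hC
  have hSC : ∀ n, S n ≤ C := by
    intro n
    rw [hC, le_div_iff₀ (by linarith)]
    have := hSb n
    linarith [this]
  have hNk : ∀ k : ℕ, (1/2) * N (k + 2) ≤
      αbar * t (k + 1) + δ (k + 1) - (φ (k + 2) - φ (k + 1)) := by
    intro k
    have h1 := hrec (k + 1) (by omega)
    have h2 := habt (k + 1)
    simp only [Nat.add_sub_cancel] at h1 h2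
    linarith
  have hNsum : ∀ n : ℕ, ∑ k ∈ Finset.range n, N (k + 2) ≤
      2 * (αbar * C + D + φ 1) := by
    intro n
    have h1 : ∑ k ∈ Finset.range n, (1/2) * N (k + 2) ≤
        ∑ k ∈ Finset.range n, (αbar * t (k + 1) + δ (k + 1)
          - (φ (k + 2) - φ (k + 1))) :=
      Finset.sum_le_sum (fun k _ => hNk k)
    have h2 : ∑ k ∈ Finset.range n, (αbar * t (k + 1) + δ (k + 1)
          - (φ (k + 2) - φ (k + 1)))
        = αbar * S n + (∑ k ∈ Finset.range n, δ (k + 1))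
          - (φ (n + 1) - φ 1) := by
      rw [Finset.sum_sub_distrib, Finset.sum_add_distrib, ← Finset.mul_sum]
      congr 1
      exact Finset.sum_range_sub (fun i => φ (i + 1)) n
    have h3 : ∑ k ∈ Finset.range n, δ (k + 1) ≤ D := by
      have h5 : ∑ k ∈ Finset.range (n + 1), δ k =
          (∑ k ∈ Finset.range n, δ (k + 1)) + δ 0 :=
        Finset.sum_range_succ' _ _
      have := hDb (n + 1)
      have := hδ 0
      linarith
    have h4 : ∑ k ∈ Finset.range n, (1/2) * N (k + 2)
        = (1/2) * ∑ k ∈ Finset.range n, N (k + 2) := by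
      rw [Finset.mul_sum]
    have hαS : αbar * S n ≤ αbar * C := mul_le_mul_of_nonneg_left (hSC n) hαb0
    have := hφ (n + 1)
    have := hφ 1
    nlinarith
  apply summable_of_sum_range_le
    (c := N 0 + N 1 + 2 * (αbar * C + D + φ 1)) hN
  intro n
  have hsub : ∑ k ∈ Finset.range n, N k ≤ ∑ k ∈ Finset.range (n + 2), N k :=
    Finset.sum_le_sum_of_subset_of_nonneg
      (Finset.range_subset_range.mpr (by omega)) (fun k _ _ => hN k)
  have hsplit : ∑ k ∈ Finset.range (n + 2), N k
      = (∑ k ∈ Finset.range n, N (k + 2)) + N 1 + N 0 := by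
    rw [Finset.sum_range_succ' N (n + 1), Finset.sum_range_succ' (fun k => N (k + 1)) n]
  have := hNsum n
  linarith
end
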